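/- arXiv:math/0604598 — 5 statements merged into one kernel-verified Lean document; each statement's English description precedes it below -/
import Mathlib

section
/- Fix λ > 0, r > 0, and set c = e^{λr} - e^{-λr}. For each fixed nonnegative integer k, n·C(n-1,k)·∫_r^∞ (c e^{-λx})^k (1 - c e^{-λx})^{n-k-1} λ e^{-λx} dx → 1/c as n → ∞. (That is, the expected number of nodes of degree k in the exponential random geometric graph, ignoring nodes in [0,r), converges to 1/c, independently of k.) -/
/-!
Substituting `t = c e^{-λx}` turns the integral into `(1/c) ∫₀^a t^k (1-t)^(n-k-1) dt` with
`a = c e^{-λr} = 1 - e^{-2λr} ∈ (0,1)`. Over all of `[0,1]` this is a Beta integral, and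
`n C(n-1,k) B(k+1, n-k) = 1` exactly. The missing piece over `[a,1]` is at most `(1-a)^(n-k-1)`,
whose geometric decay beats the polynomial factor `n C(n-1,k) ≤ n^(k+1)`.
-/

open MeasureTheory Real Filter Topology Set
open scoped Nat

theorem integral_pow_mul_one_sub_pow (k m : ℕ) :
    ∫ x in (0 : ℝ)..1, x ^ k * (1 - x) ^ m = (k ! * m ! : ℝ) / (k + m + 1)! := by
  have hB := Complex.betaIntegral_eq_Gamma_mul_div (k + 1) (m + 1)
    (by simp only [Complex.add_re, Complex.natCast_re, Complex.one_re]; positivity)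
    (by simp only [Complex.add_re, Complex.natCast_re, Complex.one_re]; positivity)
  rw [show (k + 1 : ℂ) + (m + 1) = ((k + m + 1 : ℕ) : ℂ) + 1 by push_cast; ring,
    Complex.Gamma_nat_eq_factorial, Complex.Gamma_nat_eq_factorial,
    Complex.Gamma_nat_eq_factorial, Complex.betaIntegral] at hB
  simp only [add_sub_cancel_right, Complex.cpow_natCast] at hB
  apply Complex.ofReal_injective
  rw [← intervalIntegral.integral_ofReal]
  push_cast
  exact hB

theorem natCast_mul_choose_mul_integral_pow_mul_one_sub_pow {n k : ℕ} (hkn : k < n) :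
    (n : ℝ) * ((n - 1).choose k : ℝ) * ∫ x in (0 : ℝ)..1, x ^ k * (1 - x) ^ (n - k - 1) = 1 := by
  obtain ⟨m, rfl⟩ := Nat.exists_eq_add_of_lt hkn
  have hfac : (k + m + 1)! = (k + m + 1) * ((k + m).choose k * k ! * m !) := by
    have := Nat.choose_mul_factorial_mul_factorial (Nat.le_add_right k m)
    rw [Nat.add_sub_cancel_left] at this
    rw [Nat.factorial_succ, this]
  have hchoose : ((k + m).choose k : ℝ) ≠ 0 :=
    mod_cast (Nat.choose_pos (Nat.le_add_right k m)).ne'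
  rw [integral_pow_mul_one_sub_pow, show k + m + 1 - 1 = k + m by omega,
    show k + m + 1 - k - 1 = m by omega, hfac]
  push_cast
  field_simp

theorem integral_pow_mul_one_sub_pow_nonneg {a : ℝ} (ha : 0 ≤ a) (ha1 : a ≤ 1) (k m : ℕ) :
    0 ≤ ∫ x in a..1, x ^ k * (1 - x) ^ m :=
  intervalIntegral.integral_nonneg ha1 fun x hx => by
    have : 0 ≤ 1 - x := by linarith [hx.2]
    have : 0 ≤ x := ha.trans hx.1
    positivity

theorem integral_pow_mul_one_sub_pow_le {a : ℝ} (ha : 0 ≤ a) (ha1 : a ≤ 1) (k m : ℕ) :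
    ∫ x in a..1, x ^ k * (1 - x) ^ m ≤ (1 - a) ^ m := by
  have hbound : ∀ x ∈ Icc a 1, x ^ k * (1 - x) ^ m ≤ (1 - a) ^ m := fun x hx => by
    have : 0 ≤ 1 - x := by linarith [hx.2]
    calc x ^ k * (1 - x) ^ m ≤ 1 * (1 - a) ^ m := by
          gcongr
          exacts [pow_le_one₀ (ha.trans hx.1) hx.2, hx.1]
      _ = (1 - a) ^ m := one_mul _
  calc ∫ x in a..1, x ^ k * (1 - x) ^ m ≤ ∫ _ in a..1, (1 - a) ^ m :=
        intervalIntegral.integral_mono_on ha1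
          ((by fun_prop : Continuous _).intervalIntegrable _ _) intervalIntegrable_const hbound
    _ = (1 - a) * (1 - a) ^ m := by rw [intervalIntegral.integral_const, smul_eq_mul]
    _ ≤ (1 - a) ^ m := mul_le_of_le_one_left (pow_nonneg (by linarith) m) (by linarith)

theorem tendsto_natCast_mul_choose_mul_pow (k : ℕ) {q : ℝ} (hq0 : 0 < q) (hq1 : q < 1) :
    Tendsto (fun n : ℕ => (n : ℝ) * ((n - 1).choose k : ℝ) * q ^ (n - k - 1)) atTop (𝓝 0) := by
  have hgeom : Tendsto (fun n : ℕ => (n : ℝ) ^ (k + 1) * q ^ n / q ^ (k + 1)) atTop (𝓝 0) := by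
    simpa using (tendsto_pow_const_mul_const_pow_of_abs_lt_one (k + 1)
      (abs_lt.2 ⟨by linarith, hq1⟩)).div_const (q ^ (k + 1))
  refine squeeze_zero' (Eventually.of_forall fun n => by positivity) ?_ hgeom
  filter_upwards [eventually_ge_atTop (k + 1)] with n hn
  have hchoose : ((n - 1).choose k : ℝ) ≤ (n : ℝ) ^ k := by
    exact_mod_cast (Nat.choose_le_pow (n - 1) k).trans (Nat.pow_le_pow_left (Nat.sub_le n 1) k)
  calc (n : ℝ) * ((n - 1).choose k : ℝ) * q ^ (n - k - 1)
      ≤ (n : ℝ) * (n : ℝ) ^ k * q ^ (n - k - 1) := by gcongr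
    _ = (n : ℝ) ^ (k + 1) * q ^ n / q ^ (k + 1) := by
      rw [Nat.sub_sub, pow_sub₀ q hq0.ne' hn]
      ring

theorem tendsto_natCast_mul_choose_mul_integral_pow_mul_one_sub_pow (k : ℕ) {a : ℝ}
    (ha0 : 0 < a) (ha1 : a < 1) :
    Tendsto (fun n : ℕ => (n : ℝ) * ((n - 1).choose k : ℝ) *
      ∫ x in a..1, x ^ k * (1 - x) ^ (n - k - 1)) atTop (𝓝 0) :=
  squeeze_zero
    (fun n => mul_nonneg (by positivity)
      (integral_pow_mul_one_sub_pow_nonneg ha0.le ha1.le k (n - k - 1)))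
    (fun n => by gcongr; exact integral_pow_mul_one_sub_pow_le ha0.le ha1.le k (n - k - 1))
    (tendsto_natCast_mul_choose_mul_pow k (sub_pos.2 ha1) (by linarith))

theorem integral_Ioi_comp_mul_exp_neg (g : ℝ → ℝ) {lam c : ℝ} (hlam : 0 < lam) (hc : 0 < c)
    (r : ℝ) :
    ∫ x in Ioi r, g (c * exp (-(lam * x))) * (lam * exp (-(lam * x))) =
      1 / c * ∫ t in (0 : ℝ)..c * exp (-(lam * r)), g t := by
  set f : ℝ → ℝ := fun x => c * exp (-(lam * x))
  have hf_anti : StrictAnti f := fun x y hxy =>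
    mul_lt_mul_of_pos_left (exp_lt_exp.2 (by nlinarith)) hc
  have hf_deriv : ∀ x ∈ Ioi r, HasDerivWithinAt f (-(c * lam * exp (-(lam * x)))) (Ioi r) x := by
    intro x _
    exact (((hasDerivAt_id' x).const_mul lam).fun_neg.exp.const_mul c).hasDerivWithinAt.congr_deriv
      (by ring)
  have hf_image : f '' Ioi r = Ioo 0 (f r) := by
    ext y
    constructor
    · rintro ⟨x, hx, rfl⟩
      exact ⟨by positivity, hf_anti hx⟩
    · rintro ⟨hy0, hyr⟩
      refine ⟨(log c - log y) / lam, ?_, ?_⟩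
      · have : log y < log c - lam * r := by
          simpa [f, log_mul hc.ne' (exp_pos _).ne', sub_eq_add_neg] using log_lt_log hy0 hyr
        rw [mem_Ioi, lt_div_iff₀ hlam]
        linarith
      · simp only [f, mul_div_cancel₀ _ hlam.ne', neg_sub, exp_sub, exp_log hy0, exp_log hc]
        field_simp
  have hchange := integral_image_eq_integral_abs_deriv_smul measurableSet_Ioi hf_deriv
    hf_anti.injective.injOn g
  rw [hf_image, ← integral_Ioc_eq_integral_Ioo,
    ← intervalIntegral.integral_of_le (by positivity)] at hchange
  rw [hchange, ← integral_const_mul]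
  refine setIntegral_congr_fun measurableSet_Ioi fun x _ => ?_
  rw [abs_neg, abs_of_pos (by positivity), smul_eq_mul]
  field_simp
  rfl

theorem exp_sub_exp_neg_mul_exp_neg (y : ℝ) :
    (exp y - exp (-y)) * exp (-y) = 1 - exp (-(2 * y)) := by
  rw [sub_mul, ← exp_add, ← exp_add, add_neg_cancel, exp_zero]
  ring_nf

/-- The expected number of degree-`k` nodes in the exponential RGG (ignoring nodes
in `[0,r)`) converges to `1/c` where `c = e^{λr} - e^{-λr}`, independently of `k`. -/
theorem expected_degree_count_tendsto
    (lam r : ℝ) (hlam : 0 < lam) (hr : 0 < r) (k : ℕ)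
    (c : ℝ) (hc : c = Real.exp (lam * r) - Real.exp (-(lam * r))) :
    Tendsto (fun n : ℕ =>
        (n : ℝ) * ((n - 1).choose k : ℝ) *
          ∫ x in Set.Ioi r,
            (c * Real.exp (-(lam * x))) ^ k *
              (1 - c * Real.exp (-(lam * x))) ^ (n - k - 1) *
              (lam * Real.exp (-(lam * x))))
      atTop (𝓝 (1 / c)) := by
  have hc0 : 0 < c := by rw [hc, sub_pos]; exact exp_lt_exp.2 (by nlinarith)
  set a := c * exp (-(lam * r)) with ha_def
  have ha : a = 1 - exp (-(2 * (lam * r))) := by rw [ha_def, hc, exp_sub_exp_neg_mul_exp_neg]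
  have ha0 : 0 < a := by rw [ha, sub_pos, exp_lt_one_iff]; nlinarith
  have ha1 : a < 1 := by rw [ha]; linarith [exp_pos (-(2 * (lam * r)))]
  have hsplit : ∀ᶠ n : ℕ in atTop, 1 / c - 1 / c * ((n : ℝ) * ((n - 1).choose k : ℝ) *
      ∫ x in a..1, x ^ k * (1 - x) ^ (n - k - 1)) = (n : ℝ) * ((n - 1).choose k : ℝ) *
        ∫ x in Ioi r, (c * exp (-(lam * x))) ^ k * (1 - c * exp (-(lam * x))) ^ (n - k - 1) *
          (lam * exp (-(lam * x))) := by
    filter_upwards [eventually_gt_atTop k] with n hkn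
    have hint : ∀ u v : ℝ, IntervalIntegrable (fun x : ℝ => x ^ k * (1 - x) ^ (n - k - 1))
        volume u v := fun u v => (by fun_prop : Continuous _).intervalIntegrable u v
    rw [integral_Ioi_comp_mul_exp_neg (fun t => t ^ k * (1 - t) ^ (n - k - 1)) hlam hc0,
      ← ha_def]
    linear_combination (-(1 / c)) * natCast_mul_choose_mul_integral_pow_mul_one_sub_pow hkn -
      (1 / c) * ((n : ℝ) * ((n - 1).choose k : ℝ)) *
        intervalIntegral.integral_add_adjacent_intervals (hint 0 a) (hint a 1)
  have htail := tendsto_natCast_mul_choose_mul_integral_pow_mul_one_sub_pow k ha0 ha1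
  simpa using (tendsto_const_nhds.sub (htail.const_mul (1 / c))).congr' hsplit
end

section
/- Let λ > 0 and for each n let Y_{i,n}, i = 1,...,n-1, be independent exponential random variables with Y_{i,n} of rate iλ. Let c_n = max_{1 ≤ i ≤ n-1} Y_{i,n}. Then for any ε > 0, ∑_{n=2}^∞ P(λ c_n ≥ (1+ε) log n) < ∞, and consequently limsup_{n→∞} λ c_n / log n ≤ 1 almost surely. -/
/-!
By the union bound and the exponential tails `P(λ Y_{i,n} ≥ y) = e^{-iy}`, the
probability `P(λ c_n ≥ (1+ε) log n)` is at most the geometric sum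
`∑_{i ≥ 1} n^{-(1+ε)i} ≤ 2 n^{-(1+ε)}`, which is summable in `n`. Borel–Cantelli then
gives, almost surely and for every `ε` in a sequence decreasing to `0`, eventually
`λ c_n < (1+ε) log n`.
-/

open MeasureTheory ProbabilityTheory Real Filter Topology

lemma expMeasure_Ici {r t : ℝ} (hr : 0 < r) (ht : 0 ≤ t) :
    expMeasure r (Set.Ici t) = ENNReal.ofReal (exp (-(r * t))) := by
  have := isProbabilityMeasure_expMeasure hr
  have hsing : expMeasure r {t} = 0 :=
    withDensity_absolutelyContinuous _ _ Real.volume_singleton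
  have hexp : exp (-(r * t)) ≤ 1 := exp_le_one_iff.mpr (by nlinarith)
  rw [← measure_congr (Ioi_ae_eq_Ici' hsing), ← Set.compl_Iic,
    prob_compl_eq_one_sub measurableSet_Iic, ← ofReal_cdf, cdf_expMeasure_eq hr, if_pos ht,
    ← ENNReal.ofReal_one, ← ENNReal.ofReal_sub _ (by linarith), sub_sub_cancel]

lemma measure_le_sup'_le_sum {Ω ι α : Type*} [MeasurableSpace Ω] [LinearOrder α]
    (μ : Measure Ω) {s : Finset ι} (hs : s.Nonempty) (f : ι → Ω → α) (t : α) :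
    μ {ω | t ≤ s.sup' hs (f · ω)} ≤ ∑ i ∈ s, μ {ω | t ≤ f i ω} := by
  refine (measure_mono fun ω hω => ?_).trans (measure_biUnion_finset_le s _)
  obtain ⟨i, hi, hle⟩ := (Finset.le_sup'_iff _).mp hω
  exact Set.mem_biUnion hi hle

lemma sum_Icc_pow_le_two_mul {r : ℝ} (hr : 0 ≤ r) (hr2 : r ≤ 1 / 2) (m : ℕ) :
    ∑ i ∈ Finset.Icc 1 m, r ^ i ≤ 2 * r := by
  calc ∑ i ∈ Finset.Icc 1 m, r ^ i = ∑ i ∈ Finset.Ico 1 (m + 1), r ^ i := rfl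
    _ ≤ r ^ 1 / (1 - r) := geom_sum_Ico_le_of_lt_one hr (by linarith)
    _ ≤ 2 * r := by
      rw [pow_one, div_le_iff₀ (by linarith)]
      nlinarith

lemma measure_le_sup'_exp_spacings {Ω : Type*} [MeasurableSpace Ω] (μ : Measure Ω)
    {lam : ℝ} (hlam : 0 < lam) {m : ℕ} (hm : (Finset.Icc 1 m).Nonempty)
    (Y : ℕ → Ω → ℝ) (hmeas : ∀ i, Measurable (Y i))
    (hdist : ∀ i ∈ Finset.Icc 1 m, μ.map (Y i) = expMeasure ((i : ℝ) * lam))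
    {t : ℝ} (ht : 0 ≤ t) :
    μ {ω | t ≤ (Finset.Icc 1 m).sup' hm (Y · ω)} ≤
      ENNReal.ofReal (∑ i ∈ Finset.Icc 1 m, exp (-(lam * t)) ^ i) := by
  rw [ENNReal.ofReal_sum_of_nonneg fun i _ => by positivity]
  refine (measure_le_sup'_le_sum μ hm Y t).trans (Finset.sum_le_sum fun i hi => le_of_eq ?_)
  have hipos : (0 : ℝ) < i := by exact_mod_cast (Finset.mem_Icc.mp hi).1
  change μ (Y i ⁻¹' Set.Ici t) = _
  rw [← Measure.map_apply (hmeas i) measurableSet_Ici, hdist i hi,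
    expMeasure_Ici (by positivity) ht, ← exp_nat_mul]
  congr 2
  ring

lemma toReal_measure_connectivity_tail_le {Ω : Type*} [MeasurableSpace Ω] (μ : Measure Ω)
    {lam : ℝ} (hlam : 0 < lam) {n : ℕ} (hn : 2 ≤ n) (hne : (Finset.Icc 1 (n - 1)).Nonempty)
    (Y : ℕ → Ω → ℝ) (hmeas : ∀ i, Measurable (Y i))
    (hdist : ∀ i ∈ Finset.Icc 1 (n - 1), μ.map (Y i) = expMeasure ((i : ℝ) * lam))
    (c : Ω → ℝ) (hc : ∀ ω, c ω = (Finset.Icc 1 (n - 1)).sup' hne (Y · ω))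
    {ε : ℝ} (hε : 0 < ε) :
    (μ {ω | (1 + ε) * log n ≤ lam * c ω}).toReal ≤ 2 * (n : ℝ) ^ (-(1 + ε)) := by
  have hn1 : (1 : ℝ) < n := by exact_mod_cast hn
  have hlog : 0 < log n := log_pos hn1
  set t := (1 + ε) * log n / lam
  have hexp : exp (-(lam * t)) = (n : ℝ) ^ (-(1 + ε)) := by
    rw [rpow_def_of_pos (by linarith), mul_div_cancel₀ _ hlam.ne', mul_neg, mul_comm]
  have hhalf : (n : ℝ) ^ (-(1 + ε)) ≤ 1 / 2 :=
    calc (n : ℝ) ^ (-(1 + ε)) ≤ 2 ^ (-(1 + ε)) :=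
          rpow_le_rpow_of_nonpos (by norm_num) (by exact_mod_cast hn) (by linarith)
      _ ≤ 2 ^ (-1 : ℝ) := rpow_le_rpow_of_exponent_le (by norm_num) (by linarith)
      _ = 1 / 2 := by norm_num [rpow_neg_one]
  have hset : {ω | (1 + ε) * log n ≤ lam * c ω} =
      {ω | t ≤ (Finset.Icc 1 (n - 1)).sup' hne (Y · ω)} := by
    ext ω
    simp only [Set.mem_ofPred_eq, t, div_le_iff₀ hlam, mul_comm _ lam, hc]
  rw [hset]
  refine ENNReal.toReal_le_of_le_ofReal (by positivity) ((measure_le_sup'_exp_spacings μ hlam _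
    Y hmeas hdist (by positivity)).trans (ENNReal.ofReal_le_ofReal ?_))
  rw [hexp]
  exact sum_Icc_pow_le_two_mul (by positivity) hhalf _

lemma ae_eventually_notMem_of_summable_toReal {Ω : Type*} [MeasurableSpace Ω]
    {μ : Measure Ω} [IsFiniteMeasure μ] {s : ℕ → Set Ω}
    (hs : Summable fun n => (μ (s n)).toReal) :
    ∀ᵐ ω ∂μ, ∀ᶠ n in atTop, ω ∉ s n := by
  refine ae_eventually_notMem (ne_of_eq_of_ne ?_
    (ENNReal.ofReal_ne_top (r := ∑' n, (μ (s n)).toReal)))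
  rw [ENNReal.ofReal_tsum_of_nonneg (fun n => ENNReal.toReal_nonneg) hs]
  simp only [ENNReal.ofReal_toReal (measure_ne_top μ _)]

/-- `0 ≤ a` covers the junk value `limsup u f = 0` when `u` is not cobounded above. -/
lemma limsup_le_of_forall_pos_eventually_le_add {ι : Type*} {f : Filter ι} {u : ι → ℝ}
    {a : ℝ} (ha : 0 ≤ a) (h : ∀ ε > 0, ∀ᶠ i in f, u i ≤ a + ε) : limsup u f ≤ a := by
  by_cases hco : IsCoboundedUnder (· ≤ ·) f u
  · exact le_of_forall_pos_le_add fun ε hε => limsup_le_of_le hco (h ε hε)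
  · rw [Real.limsup_of_not_isCoboundedUnder hco]
    exact ha

/-- For the connectivity distance `c_n = max_{1≤i≤n-1} Y_{i,n}` of the exponential
RGG, where the spacings `Y_{i,n}` are independent exponentials of rate `iλ`:
for every `ε > 0` the series `∑_n P(λ c_n ≥ (1+ε) log n)` converges, and
consequently `limsup_n λ c_n / log n ≤ 1` almost surely. -/
theorem connectivity_distance_limsup_le_one
    {Ω : Type*} [MeasurableSpace Ω] (μ : Measure Ω) [IsProbabilityMeasure μ]
    (lam : ℝ) (hlam : 0 < lam)
    (Y : ℕ → ℕ → Ω → ℝ) (hmeas : ∀ n i, Measurable (Y n i))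
    (hdist : ∀ n : ℕ, ∀ i ∈ Finset.Icc 1 (n - 1),
      μ.map (Y n i) = expMeasure ((i : ℝ) * lam))
    (c : ℕ → Ω → ℝ)
    (hc : ∀ n : ℕ, ∀ hn : 2 ≤ n, ∀ ω, c n ω =
      (Finset.Icc 1 (n - 1)).sup' (Finset.nonempty_Icc.mpr (by omega))
        (fun i => Y n i ω)) :
    (∀ ε : ℝ, 0 < ε →
      Summable (fun n : ℕ =>
        (μ {ω | (1 + ε) * Real.log n ≤ lam * c n ω}).toReal)) ∧
    ∀ᵐ ω ∂μ, Filter.limsup (fun n : ℕ => lam * c n ω / Real.log n) atTop ≤ 1 := by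
  have hsummable : ∀ ε : ℝ, 0 < ε →
      Summable (fun n : ℕ => (μ {ω | (1 + ε) * log n ≤ lam * c n ω}).toReal) := by
    intro ε hε
    rw [← summable_nat_add_iff 2]
    refine .of_nonneg_of_le (fun n => ENNReal.toReal_nonneg) (fun n =>
      toReal_measure_connectivity_tail_le μ hlam (by omega) _ (Y (n + 2)) (hmeas _) (hdist _) _
        (hc _ (by omega)) hε) ?_
    exact (summable_nat_add_iff 2).mpr ((summable_nat_rpow.mpr (by linarith)).mul_left 2)
  refine ⟨hsummable, ?_⟩
  have hBC : ∀ᵐ ω ∂μ, ∀ k : ℕ,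
      ∀ᶠ n : ℕ in atTop, ¬ (1 + 1 / ((k : ℝ) + 1)) * log n ≤ lam * c n ω :=
    ae_all_iff.mpr fun k => ae_eventually_notMem_of_summable_toReal (hsummable _ (by positivity))
  filter_upwards [hBC] with ω hω
  refine limsup_le_of_forall_pos_eventually_le_add zero_le_one fun ε hε => ?_
  obtain ⟨k, hk⟩ := exists_nat_one_div_lt hε
  filter_upwards [hω k, eventually_ge_atTop 2] with n hlt hn
  have hlog : 0 < log n := log_pos (by exact_mod_cast hn)
  rw [div_le_iff₀ hlog]
  nlinarith
end

section
/- Fix λ > 0, r > 0 and a > 1/(λr). Let k_n = ⌊n(1 - a log n / n)⌋. For independent exponential spacings Y_{i,n} of rate (n-i)λ, i = 1,...,n-1, the probability that some spacing among i = 1,...,k_n - 1 exceeds r is at most ∑_{i=1}^{k_n - 1} e^{-λr(n-i)} = (e^{λr}/(e^{λr}-1))(e^{-λr(n-k_n)} - e^{-λrn}), and this bound is summable over n; hence by Borel–Cantelli, almost surely the restriction of the exponential RGG to its first k_n ordered points is connected for all sufficiently large n. -/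
/-!
The event that some spacing among the first `k_n - 1` exceeds `r` is a union of exponential
tails, so its probability is at most `∑ e^{-λr(n-i)}`, a geometric sum dominated by
`e^{-λr(n-k_n)}` up to a constant. Since `k_n ≤ n - a log n`, this is at most `n^{-λra}`,
which is summable because `λra > 1`; Borel–Cantelli finishes the proof.
-/

open MeasureTheory ProbabilityTheory Real Filter Topology

lemma expMeasure_Ioi {ρ x : ℝ} (hρ : 0 < ρ) (hx : 0 ≤ x) :
    expMeasure ρ (Set.Ioi x) = ENNReal.ofReal (exp (-(ρ * x))) := by
  have := isProbabilityMeasure_expMeasure hρ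
  have hexp : exp (-(ρ * x)) ≤ 1 := exp_le_one_iff.2 (by nlinarith)
  rw [← Set.compl_Iic, prob_compl_eq_one_sub measurableSet_Iic, ← ofReal_cdf,
    cdf_expMeasure_eq hρ, if_pos hx, ← ENNReal.ofReal_one,
    ← ENNReal.ofReal_sub _ (sub_nonneg.2 hexp), sub_sub_cancel]

lemma measure_exists_lt_le_sum_exp {Ω ι : Type*} [MeasurableSpace Ω] {μ : Measure Ω}
    {X : ι → Ω → ℝ} {ρ : ι → ℝ} {s : Finset ι} {x : ℝ}
    (hX : ∀ i ∈ s, μ.map (X i) = expMeasure (ρ i)) (hρ : ∀ i ∈ s, 0 < ρ i) (hx : 0 ≤ x) :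
    μ {ω | ∃ i ∈ s, x < X i ω} ≤ ENNReal.ofReal (∑ i ∈ s, exp (-(ρ i * x))) := by
  have hunion : {ω | ∃ i ∈ s, x < X i ω} = ⋃ i ∈ s, X i ⁻¹' Set.Ioi x := by ext; simp
  rw [hunion, ENNReal.ofReal_sum_of_nonneg fun i _ => (exp_pos _).le]
  refine (measure_biUnion_finset_le _ _).trans (Finset.sum_le_sum fun i hi => ?_)
  -- `Measure.map` along a non-a.e.-measurable map is `0`, so having a law forces a.e.-measurability.
  have hXi : AEMeasurable (X i) μ := .of_map_ne_zero <| by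
    rw [hX i hi]; exact (isProbabilityMeasure_expMeasure (hρ i hi)).ne_zero
  rw [← Measure.map_apply_of_aemeasurable hXi measurableSet_Ioi, hX i hi,
    expMeasure_Ioi (hρ i hi) hx]

lemma sum_Icc_exp_neg_mul_sub {c : ℝ} (hc : c ≠ 0) (t : ℝ) (K : ℕ) :
    ∑ i ∈ Finset.Icc 1 K, exp (-(c * (t - i))) =
      exp c / (exp c - 1) * (exp (-(c * (t - K))) - exp (-(c * t))) := by
  have hE : exp c - 1 ≠ 0 := sub_ne_zero.2 fun h => hc (Real.exp_eq_one_iff _ |>.1 h)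
  induction K with
  | zero => simp
  | succ K ih =>
    rw [Finset.sum_Icc_succ_top (by omega), ih]
    have hstep : exp (-(c * (t - (K + 1 : ℕ)))) = exp (-(c * (t - K))) * exp c := by
      rw [← exp_add]; push_cast; ring_nf
    rw [hstep]
    field_simp
    ring

lemma sum_Icc_exp_neg_mul_sub_le {c : ℝ} (hc : 0 < c) (t : ℝ) (K : ℕ) :
    ∑ i ∈ Finset.Icc 1 (K - 1), exp (-(c * (t - i))) ≤
      exp c / (exp c - 1) * (exp (-(c * (t - K))) - exp (-(c * t))) := by
  rw [sum_Icc_exp_neg_mul_sub hc.ne']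
  have : 0 ≤ exp c - 1 := sub_nonneg.2 (one_le_exp hc.le)
  gcongr
  exact_mod_cast Nat.sub_le K 1

lemma summable_exp_neg_mul_natCast {c : ℝ} (hc : 0 < c) :
    Summable fun n : ℕ => exp (-(c * n)) :=
  (summable_exp_nat_mul_iff.2 (neg_lt_zero.2 hc)).congr fun n => by ring_nf

lemma summable_exp_neg_mul_sub_of_le_sub_log {c a : ℝ} {k : ℕ → ℕ} (hc : 0 ≤ c)
    (hca : 1 < c * a) (hk : ∀ᶠ n : ℕ in atTop, (k n : ℝ) ≤ n - a * log n) :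
    Summable fun n : ℕ => exp (-(c * (n - k n))) := by
  refine (summable_nat_rpow.2 (neg_lt_neg hca)).of_norm_bounded_eventually_nat ?_
  filter_upwards [hk, eventually_ge_atTop 1] with n hkn hn
  have hn0 : (0 : ℝ) < n := by exact_mod_cast hn
  rw [norm_of_nonneg (exp_pos _).le, rpow_def_of_pos hn0, exp_le_exp]
  nlinarith [mul_le_mul_of_nonneg_left (by linarith : a * log n ≤ n - k n) hc]

lemma floor_mul_one_sub_log_div_le_self {a : ℝ} (ha : 0 ≤ a) (n : ℕ) :
    ⌊(n : ℝ) * (1 - a * log n / n)⌋₊ ≤ n :=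
  Nat.floor_le_of_le (mul_le_of_le_one_right (Nat.cast_nonneg n) (sub_le_self _ (by positivity)))

lemma natCast_floor_mul_one_sub_log_div_le (a : ℝ) :
    ∀ᶠ n : ℕ in atTop, (⌊(n : ℝ) * (1 - a * log n / n)⌋₊ : ℝ) ≤ n - a * log n := by
  have hlog : ∀ᶠ x : ℝ in atTop, a * log x ≤ x := by
    filter_upwards [(isLittleO_log_id_atTop.const_mul_left a).bound one_pos,
      eventually_ge_atTop 0] with x hx hx0
    rw [one_mul, id, norm_of_nonneg hx0] at hx
    exact (le_abs_self _).trans hx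
  filter_upwards [tendsto_natCast_atTop_atTop.eventually hlog, eventually_ge_atTop 1]
    with n hlog hn
  have hn0 : (n : ℝ) ≠ 0 := by positivity
  rw [mul_one_sub, mul_div_cancel₀ _ hn0]
  exact Nat.floor_le (sub_nonneg.2 hlog)

lemma ae_eventually_notMem_of_le_ofReal {α : Type*} [MeasurableSpace α] {μ : Measure α}
    {s : ℕ → Set α} {B : ℕ → ℝ} (hs : ∀ n, μ (s n) ≤ ENNReal.ofReal (B n))
    (hB : Summable B) : ∀ᵐ x ∂μ, ∀ᶠ n in atTop, x ∉ s n :=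
  ae_eventually_notMem <| ne_top_of_le_ne_top
    (ENNReal.tsum_coe_ne_top_iff_summable.2 hB.toNNReal) (ENNReal.tsum_le_tsum hs)

theorem restricted_graph_eventually_connected_general
    {Ω : Type*} [MeasurableSpace Ω] (μ : Measure Ω)
    (lam r a : ℝ) (hlam : 0 < lam) (hr : 0 < r) (ha : 1 / (lam * r) < a)
    (Y : ℕ → ℕ → Ω → ℝ)
    (hdist : ∀ n : ℕ, ∀ i ∈ Finset.Icc 1 (n - 1),
      μ.map (Y n i) = expMeasure (((n : ℝ) - (i : ℝ)) * lam))
    (k : ℕ → ℕ) (hk : ∀ n : ℕ, k n = ⌊(n : ℝ) * (1 - a * Real.log n / n)⌋₊) :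
    (∀ n : ℕ, μ {ω | ∃ i ∈ Finset.Icc 1 (k n - 1), r < Y n i ω} ≤
      ENNReal.ofReal
        (∑ i ∈ Finset.Icc 1 (k n - 1), Real.exp (-(lam * r * ((n : ℝ) - (i : ℝ)))))) ∧
    (∀ n : ℕ,
      ∑ i ∈ Finset.Icc 1 (k n - 1), Real.exp (-(lam * r * ((n : ℝ) - (i : ℝ)))) ≤
        (Real.exp (lam * r) / (Real.exp (lam * r) - 1)) *
          (Real.exp (-(lam * r * ((n : ℝ) - (k n : ℝ)))) - Real.exp (-(lam * r * n)))) ∧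
    Summable (fun n : ℕ =>
      (Real.exp (lam * r) / (Real.exp (lam * r) - 1)) *
        (Real.exp (-(lam * r * ((n : ℝ) - (k n : ℝ)))) - Real.exp (-(lam * r * n)))) ∧
    ∀ᵐ ω ∂μ, ∃ N : ℕ, ∀ n ≥ N, ∀ i ∈ Finset.Icc 1 (k n - 1), Y n i ω ≤ r := by
  have hc : 0 < lam * r := mul_pos hlam hr
  have hca : 1 < lam * r * a := by rw [div_lt_iff₀ hc] at ha; linarith
  have hkn (n : ℕ) : k n ≤ n :=
    hk n ▸ floor_mul_one_sub_log_div_le_self (lt_trans (by positivity) ha).le n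
  have tail (n : ℕ) : μ {ω | ∃ i ∈ Finset.Icc 1 (k n - 1), r < Y n i ω} ≤
      ENNReal.ofReal
        (∑ i ∈ Finset.Icc 1 (k n - 1), Real.exp (-(lam * r * ((n : ℝ) - (i : ℝ))))) := by
    have hsub : Finset.Icc 1 (k n - 1) ⊆ Finset.Icc 1 (n - 1) :=
      Finset.Icc_subset_Icc_right (Nat.sub_le_sub_right (hkn n) 1)
    refine (measure_exists_lt_le_sum_exp (fun i hi => hdist n i (hsub hi)) (fun i hi => ?_)
      hr.le).trans_eq ?_
    · have hin : i < n := by have := Finset.mem_Icc.1 (hsub hi); omega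
      have : (i : ℝ) < n := by exact_mod_cast hin
      exact mul_pos (sub_pos.2 this) hlam
    · exact congrArg ENNReal.ofReal (Finset.sum_congr rfl fun i _ => by ring_nf)
  have bound (n : ℕ) := sum_Icc_exp_neg_mul_sub_le hc (n : ℝ) (k n)
  have hk_le : ∀ᶠ n : ℕ in atTop, (k n : ℝ) ≤ n - a * log n :=
    (natCast_floor_mul_one_sub_log_div_le a).mono fun n h => by rwa [hk n]
  have summable := ((summable_exp_neg_mul_sub_of_le_sub_log hc.le hca hk_le).sub
    (summable_exp_neg_mul_natCast hc)).mul_left (exp (lam * r) / (exp (lam * r) - 1))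
  refine ⟨tail, bound, summable, ?_⟩
  filter_upwards [ae_eventually_notMem_of_le_ofReal
    (fun n => (tail n).trans (ENNReal.ofReal_le_ofReal (bound n))) summable] with ω hω
  obtain ⟨N, hN⟩ := eventually_atTop.1 hω
  exact ⟨N, fun n hn i hi => not_lt.1 fun h => hN n hn ⟨i, hi, h⟩⟩

/-- Let `k_n = ⌊n(1 - a log n / n)⌋` with `a > 1/(λr)`, and let `Y_{i,n}` be
independent exponential spacings of rate `(n-i)λ`. The probability that some
spacing among `i = 1,…,k_n - 1` exceeds `r` is at most
`∑_{i=1}^{k_n-1} e^{-λr(n-i)} ≤ (e^{λr}/(e^{λr}-1))(e^{-λr(n-k_n)} - e^{-λrn})`,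
which is summable in `n`; hence by Borel–Cantelli the restriction of the
exponential RGG to its first `k_n` ordered points is a.s. eventually connected. -/
theorem restricted_graph_eventually_connected
    {Ω : Type*} [MeasurableSpace Ω] (μ : Measure Ω) [IsProbabilityMeasure μ]
    (lam r a : ℝ) (hlam : 0 < lam) (hr : 0 < r) (ha : 1 / (lam * r) < a)
    (Y : ℕ → ℕ → Ω → ℝ) (hmeas : ∀ n i, Measurable (Y n i))
    (hindep : ∀ n : ℕ,
      iIndepFun (fun i : Fin (n - 1) => Y n ((i : ℕ) + 1)) μ)
    (hdist : ∀ n : ℕ, ∀ i ∈ Finset.Icc 1 (n - 1),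
      μ.map (Y n i) = expMeasure (((n : ℝ) - (i : ℝ)) * lam))
    (k : ℕ → ℕ) (hk : ∀ n : ℕ, k n = ⌊(n : ℝ) * (1 - a * Real.log n / n)⌋₊) :
    (∀ n : ℕ, μ {ω | ∃ i ∈ Finset.Icc 1 (k n - 1), r < Y n i ω} ≤
      ENNReal.ofReal
        (∑ i ∈ Finset.Icc 1 (k n - 1), Real.exp (-(lam * r * ((n : ℝ) - (i : ℝ)))))) ∧
    (∀ n : ℕ,
      ∑ i ∈ Finset.Icc 1 (k n - 1), Real.exp (-(lam * r * ((n : ℝ) - (i : ℝ)))) ≤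
        (Real.exp (lam * r) / (Real.exp (lam * r) - 1)) *
          (Real.exp (-(lam * r * ((n : ℝ) - (k n : ℝ)))) - Real.exp (-(lam * r * n)))) ∧
    Summable (fun n : ℕ =>
      (Real.exp (lam * r) / (Real.exp (lam * r) - 1)) *
        (Real.exp (-(lam * r * ((n : ℝ) - (k n : ℝ)))) - Real.exp (-(lam * r * n)))) ∧
    ∀ᵐ ω ∂μ, ∃ N : ℕ, ∀ n ≥ N, ∀ i ∈ Finset.Icc 1 (k n - 1), Y n i ω ≤ r :=
  restricted_graph_eventually_connected_general μ lam r a hlam hr ha Y hdist k hk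
end

section
/- Fix λ > 0, p ∈ (0,1), a > 0, and set r_n = a·(p/(λ(1-p)))·(log n)/n and N = N(n) = ⌊n/p⌋. Define P_n = ∏_{j=N-n+1}^{N-1} (1 - e^{-λ r_n j}). Then: if a > 1, P_n → 1 as n → ∞; and if 0 < a < 1, P_n → 0 as n → ∞. -/
/-!
Write `θ = λ r_n = a log n / (d n)` with `d = (1 - p) / p`; the indices run over `K < j < K + n`
with `K = N - n ∈ (d n - 1, d n]`, so `θ (K + 1) ≥ a log n`, while `θ j ≤ a log n + a / d` for
the first `⌊n / log n⌋` indices. For `a > 1` every `e^{-θ j}` is at most `n^{-a}`, and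
`∏ (1 - x_j) ≥ 1 - ∑ x_j` gives `P_n ≥ 1 - n^{1-a}`. For `a < 1`, `∏ (1 - x_j) ≤ exp (-∑ x_j)`
and the first `⌊n / log n⌋` terms alone contribute `≳ n^{1-a} / log n → ∞` to the sum.
-/

open Real Filter Topology Finset

theorem one_sub_sum_le_prod_one_sub {ι : Type*} (s : Finset ι) {f : ι → ℝ}
    (h0 : ∀ i ∈ s, 0 ≤ f i) (h1 : ∀ i ∈ s, f i ≤ 1) :
    1 - ∑ i ∈ s, f i ≤ ∏ i ∈ s, (1 - f i) := by
  induction s using Finset.cons_induction with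
  | empty => simp
  | cons i s _ ih =>
    simp only [mem_cons, forall_eq_or_imp] at h0 h1
    rw [prod_cons, sum_cons]
    have := mul_le_mul_of_nonneg_left (ih h0.2 h1.2) (sub_nonneg.2 h1.1)
    nlinarith [mul_nonneg h0.1 (sum_nonneg h0.2)]

theorem prod_one_sub_le_exp_neg_sum {ι : Type*} (s : Finset ι) {f : ι → ℝ}
    (h1 : ∀ i ∈ s, f i ≤ 1) : ∏ i ∈ s, (1 - f i) ≤ exp (-∑ i ∈ s, f i) := by
  rw [← sum_neg_distrib, exp_sum]
  exact prod_le_prod (fun i hi => sub_nonneg.2 (h1 i hi)) fun i _ => one_sub_le_exp_neg _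

theorem tendsto_rpow_div_log_atTop {r : ℝ} (hr : 0 < r) :
    Tendsto (fun x : ℝ => x ^ r / log x) atTop atTop := by
  have hpos : ∀ᶠ x in atTop, log x / x ^ r ∈ Set.Ioi 0 :=
    (eventually_gt_atTop 1).mono fun x hx => div_pos (log_pos hx) (by positivity)
  have := (tendsto_nhdsWithin_iff.2
    ⟨(isLittleO_log_rpow_atTop hr).tendsto_div_nhds_zero, hpos⟩).inv_tendsto_nhdsGT_zero
  exact this.congr fun x => inv_div _ _

/-- `θ = λ r`: the `j`-th spacing is exponential of rate `jλ`, hence at most `r` with probability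
`1 - e^{-θ j}`. -/
noncomputable def connectivityProduct (θ : ℝ) (K n : ℕ) : ℝ :=
  ∏ j ∈ Ioo K (K + n), (1 - exp (-(θ * j)))

section connectivityProduct

variable {θ : ℝ} (K n : ℕ)

theorem exp_neg_mul_natCast_le_one (hθ : 0 ≤ θ) (j : ℕ) : exp (-(θ * j)) ≤ 1 :=
  exp_le_one_iff.2 (neg_nonpos.2 (by positivity))

theorem connectivityProduct_nonneg (hθ : 0 ≤ θ) : 0 ≤ connectivityProduct θ K n :=
  prod_nonneg fun j _ => sub_nonneg.2 (exp_neg_mul_natCast_le_one hθ j)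

theorem connectivityProduct_le_one (hθ : 0 ≤ θ) : connectivityProduct θ K n ≤ 1 :=
  prod_le_one (fun j _ => sub_nonneg.2 (exp_neg_mul_natCast_le_one hθ j))
    fun _ _ => sub_le_self _ (exp_pos _).le

theorem one_sub_mul_exp_le_connectivityProduct (hθ : 0 ≤ θ) :
    1 - n * exp (-(θ * (K + 1))) ≤ connectivityProduct θ K n := by
  have hterm : ∀ j ∈ Ioo K (K + n), exp (-(θ * j)) ≤ exp (-(θ * (K + 1))) := by
    intro j hj
    have : (K + 1 : ℝ) ≤ j := by exact_mod_cast (mem_Ioo.1 hj).1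
    gcongr
  have hsum : ∑ j ∈ Ioo K (K + n), exp (-(θ * j)) ≤ n * exp (-(θ * (K + 1))) := by
    calc ∑ j ∈ Ioo K (K + n), exp (-(θ * j))
        ≤ #(Ioo K (K + n)) • exp (-(θ * (K + 1))) := sum_le_card_nsmul _ _ _ hterm
      _ ≤ n * exp (-(θ * (K + 1))) := by
        rw [nsmul_eq_mul, Nat.card_Ioo]
        gcongr
        exact_mod_cast (by omega : K + n - K - 1 ≤ n)
  exact (sub_le_sub_left hsum 1).trans <| one_sub_sum_le_prod_one_sub _
    (fun j _ => (exp_pos _).le) fun j _ => exp_neg_mul_natCast_le_one hθ j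

theorem connectivityProduct_le_exp (hθ : 0 ≤ θ) {m : ℕ} (hm : m < n) :
    connectivityProduct θ K n ≤ exp (-(m * exp (-(θ * (K + m))))) := by
  have hterm : ∀ j ∈ Ioc K (K + m), exp (-(θ * (K + m))) ≤ exp (-(θ * j)) := by
    intro j hj
    have : (j : ℝ) ≤ K + m := by exact_mod_cast (mem_Ioc.1 hj).2
    gcongr
  have hsum : m * exp (-(θ * (K + m))) ≤ ∑ j ∈ Ioo K (K + n), exp (-(θ * j)) := by
    calc (m : ℝ) * exp (-(θ * (K + m)))
        = #(Ioc K (K + m)) • exp (-(θ * (K + m))) := by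
          rw [nsmul_eq_mul, Nat.card_Ioc, Nat.add_sub_cancel_left]
      _ ≤ ∑ j ∈ Ioc K (K + m), exp (-(θ * j)) := card_nsmul_le_sum _ _ _ hterm
      _ ≤ ∑ j ∈ Ioo K (K + n), exp (-(θ * j)) := by
        refine sum_le_sum_of_subset_of_nonneg ?_ fun j _ _ => (exp_pos _).le
        exact Ioc_subset_Ioo_right (by omega)
  exact (prod_one_sub_le_exp_neg_sum _ fun j _ => exp_neg_mul_natCast_le_one hθ j).trans
    (exp_le_exp.2 (neg_le_neg hsum))

end connectivityProduct

section threshold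

variable {a d : ℝ} {K : ℕ → ℕ}

theorem tendsto_connectivityProduct_one (ha : 1 < a) (hd : 0 < d)
    (hK : ∀ n : ℕ, d * n - 1 < K n) :
    Tendsto (fun n : ℕ => connectivityProduct (a * log n / (d * n)) (K n) n) atTop (𝓝 1) := by
  have hθ : ∀ n : ℕ, 0 ≤ a * log n / (d * n) := fun n => by
    have := log_natCast_nonneg n
    have : 0 ≤ a := by linarith
    positivity
  have hlower : ∀ n : ℕ, 1 ≤ n →
      1 - (n : ℝ) ^ (1 - a) ≤ connectivityProduct (a * log n / (d * n)) (K n) n := by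
    intro n hn
    have hn0 : (0 : ℝ) < n := by exact_mod_cast hn
    have hexp : a * log n ≤ a * log n / (d * n) * (K n + 1) := by
      calc a * log n = a * log n / (d * n) * (d * n) := by field_simp
        _ ≤ a * log n / (d * n) * (K n + 1) := by gcongr; linarith [hK n]
    calc 1 - (n : ℝ) ^ (1 - a) = 1 - n * exp (-(a * log n)) := by
          rw [rpow_sub hn0, rpow_one, rpow_def_of_pos hn0, exp_neg, mul_comm (log _)]; ring
      _ ≤ 1 - n * exp (-(a * log n / (d * n) * (K n + 1))) := by gcongr
      _ ≤ _ := one_sub_mul_exp_le_connectivityProduct _ _ (hθ n)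
  have hlim : Tendsto (fun n : ℕ => 1 - (n : ℝ) ^ (1 - a)) atTop (𝓝 1) := by
    have := (tendsto_rpow_neg_atTop (by linarith : 0 < a - 1)).comp tendsto_natCast_atTop_atTop
    simpa [neg_sub] using (tendsto_const_nhds (x := (1 : ℝ))).sub this
  refine tendsto_of_tendsto_of_tendsto_of_le_of_le' hlim tendsto_const_nhds ?_ ?_
  · filter_upwards [eventually_ge_atTop 1] with n hn using hlower n hn
  · exact Eventually.of_forall fun n => connectivityProduct_le_one _ _ (hθ n)

theorem tendsto_connectivityProduct_zero (ha0 : 0 < a) (ha : a < 1) (hd : 0 < d)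
    (hK : ∀ n : ℕ, (K n : ℝ) ≤ d * n) :
    Tendsto (fun n : ℕ => connectivityProduct (a * log n / (d * n)) (K n) n) atTop (𝓝 0) := by
  set g : ℕ → ℝ := fun n => exp (-(a / d)) * ((n : ℝ) ^ (1 - a) / log n - (n : ℝ) ^ (-a))
  have hg : Tendsto g atTop atTop := by
    refine Tendsto.const_mul_atTop (exp_pos _) ?_
    have hmain := (tendsto_rpow_div_log_atTop (sub_pos.2 ha)).comp tendsto_natCast_atTop_atTop
    have hsmall := ((tendsto_rpow_neg_atTop ha0).comp tendsto_natCast_atTop_atTop).neg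
    simpa only [Function.comp_def, sub_eq_add_neg, neg_zero] using hmain.atTop_add hsmall
  have hupper : ∀ n : ℕ, 3 ≤ n →
      connectivityProduct (a * log n / (d * n)) (K n) n ≤ exp (-g n) := by
    intro n hn
    have hn0 : (0 : ℝ) < n := by positivity
    have hlog : 1 < log n := by
      rw [lt_log_iff_exp_lt hn0]
      have h3 : (3 : ℝ) ≤ n := by exact_mod_cast hn
      exact exp_one_lt_d9.trans_le (by linarith)
    set m := ⌊(n : ℝ) / log n⌋₊
    have hmn : m < n := (Nat.floor_lt (by positivity)).2 (div_lt_self hn0 hlog)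
    have hm_le : (m : ℝ) ≤ n / log n := Nat.floor_le (by positivity)
    have hm_ge : (n : ℝ) / log n - 1 < m := Nat.sub_one_lt_floor _
    have hexp : a * log n / (d * n) * (K n + m) ≤ a * log n + a / d := by
      calc a * log n / (d * n) * (K n + m)
          ≤ a * log n / (d * n) * (d * n + n / log n) := by gcongr; exact hK n
        _ = a * log n + a / d := by field_simp
    have hterm : exp (-(a / d)) * (n : ℝ) ^ (-a) ≤ exp (-(a * log n / (d * n) * (K n + m))) := by
      rw [rpow_def_of_pos hn0, ← exp_add]
      exact exp_le_exp.2 (by linarith)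
    refine (connectivityProduct_le_exp _ _ (by positivity) hmn).trans
      (exp_le_exp.2 (neg_le_neg ?_))
    calc g n = (n / log n - 1) * (exp (-(a / d)) * (n : ℝ) ^ (-a)) := by
          simp only [g]; rw [rpow_sub hn0, rpow_one, rpow_neg hn0.le]; ring
      _ ≤ m * exp (-(a * log n / (d * n) * (K n + m))) := by gcongr
  refine tendsto_of_tendsto_of_tendsto_of_le_of_le' tendsto_const_nhds
    (tendsto_exp_neg_atTop_nhds_zero.comp hg) ?_ ?_
  · exact Eventually.of_forall fun n => connectivityProduct_nonneg _ _ (by positivity)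
  · filter_upwards [eventually_ge_atTop 3] with n hn using hupper n hn

end threshold

/-- With `r_n = a (p/(λ(1-p))) (log n)/n`, `N = ⌊n/p⌋` and
`P_n = ∏_{j=N-n+1}^{N-1} (1 - e^{-λ r_n j})` the connectivity probability of the
truncated graph `G*_n(λ, r_n)`: if `a > 1` then `P_n → 1`, and if `a < 1` then
`P_n → 0`. Hence `(p/(λ(1-p))) (log n)/n` is a strong threshold for connectivity. -/
theorem strong_threshold_connectivity_truncated
    (lam p a : ℝ) (hlam : 0 < lam) (hp : p ∈ Set.Ioo (0 : ℝ) 1) (ha : 0 < a)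
    (r : ℕ → ℝ) (hr : ∀ n : ℕ, r n = a * (p / (lam * (1 - p))) * Real.log n / n)
    (N : ℕ → ℕ) (hN : ∀ n, N n = ⌊(n : ℝ) / p⌋₊)
    (P : ℕ → ℝ) (hP : ∀ n : ℕ, P n =
      ∏ j ∈ Finset.Icc (N n - n + 1) (N n - 1), (1 - Real.exp (-(lam * r n * (j : ℝ))))) :
    (1 < a → Tendsto P atTop (𝓝 1)) ∧ (a < 1 → Tendsto P atTop (𝓝 0)) := by
  obtain ⟨hp0, hp1⟩ := hp
  set d := (1 - p) / p with hd_def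
  have hd : 0 < d := div_pos (by linarith) hp0
  have hθ : ∀ n : ℕ, lam * r n = a * log n / (d * n) := fun n => by
    rw [hr, hd_def]; field_simp
  have hN_upper : ∀ n : ℕ, (N n : ℝ) ≤ n / p := fun n => hN n ▸ Nat.floor_le (by positivity)
  have hN_lower : ∀ n : ℕ, (n : ℝ) / p - 1 < N n := fun n => hN n ▸ Nat.sub_one_lt_floor _
  have hdn : ∀ n : ℕ, d * n = n / p - n := fun n => by rw [hd_def]; field_simp
  have hnN : ∀ n : ℕ, n ≤ N n := fun n => hN n ▸ Nat.le_floor (by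
    rw [le_div_iff₀ hp0]; nlinarith [(n.cast_nonneg : (0 : ℝ) ≤ n)])
  have hK : ∀ n : ℕ, ((N n - n : ℕ) : ℝ) = N n - n := fun n : ℕ => Nat.cast_sub (hnN n)
  have hP_eq : P = fun n : ℕ => connectivityProduct (a * log n / (d * n)) (N n - n) n := by
    funext n
    rw [hP, connectivityProduct, ← hθ, Nat.sub_add_cancel (hnN n)]
    congr 1
    ext j; simp only [Finset.mem_Icc, Finset.mem_Ioo]; omega
  subst hP_eq
  refine ⟨fun ha1 => tendsto_connectivityProduct_one ha1 hd fun n => ?_,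
    fun ha1 => tendsto_connectivityProduct_zero ha ha1 hd fun n => ?_⟩
  · linarith [hK n, hdn n, hN_lower n]
  · linarith [hK n, hdn n, hN_upper n]
end

section
/- Let 0 < T₁ < T₂, λ > 0, δ > 0, and let U_(1) ≤ ... ≤ U_(n) be ordered i.i.d. uniform(0,1) variables. Define node locations V₁ = {-(1/λ)log(1 - U_(i)(1 - e^{-λT₁}))} and V₂ = {-(1/λ)log(1 - U_(i)(1 - e^{-λT₂}))}. Then for every pair of indices i, j, the distance between the i-th and j-th nodes in V₂ is at least the corresponding distance in V₁; consequently the edge set (with cutoff δ) of the geometric graph on V₂ is contained in that of the graph on V₁, so for any upwards-closed graph property Θ, P(G_n(λ,δ,T₁) ∈ Θ) ≥ P(G_n(λ,δ,T₂) ∈ Θ). -/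
open MeasureTheory ProbabilityTheory Real Filter Topology

/-- Inverse-CDF coupling of truncated-exponential RGGs: with node locations
`v T u i = -(1/λ) log(1 - u i (1 - e^{-λT}))` built from the same uniforms `u`,
pairwise distances for `T₁ < T₂` satisfy `|v T₁ u i - v T₁ u j| ≤ |v T₂ u i - v T₂ u j|`;
hence the edge set (cutoff `δ`) at `T₂` is contained in that at `T₁`, so for any
upwards-closed graph property `Θ`,
`P(G_n(λ,δ,T₂) ∈ Θ) ≤ P(G_n(λ,δ,T₁) ∈ Θ)`. -/
theorem truncated_exponential_monotonicity
    {Ω : Type*} [MeasurableSpace Ω] (μ : Measure Ω) [IsProbabilityMeasure μ]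
    (lam δ T₁ T₂ : ℝ) (hlam : 0 < lam) (hδ : 0 < δ) (hT₁ : 0 < T₁) (hT₁₂ : T₁ < T₂)
    (n : ℕ)
    (v : ℝ → (Fin n → ℝ) → Fin n → ℝ)
    (hv : ∀ T u i, v T u i = -(1 / lam) * Real.log (1 - u i * (1 - Real.exp (-(lam * T)))))
    (Θ : (Fin n → Fin n → Prop) → Prop)
    (hΘ : ∀ A B : Fin n → Fin n → Prop, (∀ i j, A i j → B i j) → Θ A → Θ B)
    (U : Ω → Fin n → ℝ) (hU : Measurable U)
    (hUd : μ.map U = Measure.pi fun _ : Fin n =>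
      MeasureTheory.volume.restrict (Set.Ioo (0 : ℝ) 1)) :
    (∀ u : Fin n → ℝ, (∀ i, u i ∈ Set.Ioo (0 : ℝ) 1) → ∀ i j,
      |v T₁ u i - v T₁ u j| ≤ |v T₂ u i - v T₂ u j|) ∧
    (∀ u : Fin n → ℝ, (∀ i, u i ∈ Set.Ioo (0 : ℝ) 1) →
      Θ (fun i j => |v T₂ u i - v T₂ u j| ≤ δ) → Θ (fun i j => |v T₁ u i - v T₁ u j| ≤ δ)) ∧
    μ {ω | Θ (fun i j => |v T₂ (U ω) i - v T₂ (U ω) j| ≤ δ)} ≤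
      μ {ω | Θ (fun i j => |v T₁ (U ω) i - v T₁ (U ω) j| ≤ δ)} := by
  set c₁ : ℝ := 1 - Real.exp (-(lam * T₁)) with hc1def
  set c₂ : ℝ := 1 - Real.exp (-(lam * T₂)) with hc2def
  have hc1pos : 0 < c₁ := by
    have h : Real.exp (-(lam * T₁)) < 1 := by
      rw [Real.exp_lt_one_iff]; nlinarith
    simp only [hc1def]; linarith
  have hc2lt1 : c₂ < 1 := by
    have := Real.exp_pos (-(lam * T₂)); simp only [hc2def]; linarith
  have hc12 : c₁ ≤ c₂ := by
    have h : Real.exp (-(lam * T₂)) ≤ Real.exp (-(lam * T₁)) :=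
      Real.exp_le_exp.mpr (by nlinarith)
    simp only [hc1def, hc2def]; linarith
  have hc1lt1 : c₁ < 1 := lt_of_le_of_lt hc12 hc2lt1
  have hc2pos : 0 < c₂ := lt_of_lt_of_le hc1pos hc12
  -- key log inequality
  have key : ∀ a b : ℝ, 0 < a → a ≤ b → b < 1 →
      Real.log (1 - a * c₁) - Real.log (1 - b * c₁) ≤
      Real.log (1 - a * c₂) - Real.log (1 - b * c₂) := by
    intro a b ha hab hb
    have hA : 0 < 1 - a * c₁ := by nlinarith
    have hB : 0 < 1 - b * c₁ := by nlinarith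
    have hC : 0 < 1 - a * c₂ := by nlinarith
    have hD : 0 < 1 - b * c₂ := by nlinarith
    have prod : (1 - a * c₁) * (1 - b * c₂) ≤ (1 - b * c₁) * (1 - a * c₂) := by nlinarith
    have h1 : Real.log ((1 - a * c₁) * (1 - b * c₂)) ≤
        Real.log ((1 - b * c₁) * (1 - a * c₂)) :=
      Real.log_le_log (by positivity) prod
    rw [Real.log_mul (ne_of_gt hA) (ne_of_gt hD),
        Real.log_mul (ne_of_gt hB) (ne_of_gt hC)] at h1
    linarith
  -- ordered auxiliary
  have aux : ∀ u : Fin n → ℝ, (∀ i, u i ∈ Set.Ioo (0 : ℝ) 1) → ∀ i j, u i ≤ u j →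
      |v T₁ u i - v T₁ u j| ≤ |v T₂ u i - v T₂ u j| := by
    intro u hu i j hij
    obtain ⟨hi0, hi1⟩ := hu i
    obtain ⟨hj0, hj1⟩ := hu j
    rw [hv T₁ u i, hv T₁ u j, hv T₂ u i, hv T₂ u j]
    have habs : ∀ c : ℝ, 0 < c → c < 1 →
        |(-(1 / lam) * Real.log (1 - u i * c)) - (-(1 / lam) * Real.log (1 - u j * c))|
        = (1 / lam) * (Real.log (1 - u i * c) - Real.log (1 - u j * c)) := by
      intro c hc0 hc1
      have hlog : Real.log (1 - u j * c) ≤ Real.log (1 - u i * c) := by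
        apply Real.log_le_log (by nlinarith)
        nlinarith
      have heq : (-(1 / lam) * Real.log (1 - u i * c)) - (-(1 / lam) * Real.log (1 - u j * c))
          = -((1 / lam) * (Real.log (1 - u i * c) - Real.log (1 - u j * c))) := by ring
      rw [heq, abs_neg, abs_of_nonneg]
      have : 0 ≤ (1 : ℝ) / lam := by positivity
      nlinarith
    rw [habs c₁ hc1pos hc1lt1, habs c₂ hc2pos hc2lt1]
    have hk := key (u i) (u j) hi0 hij hj1
    have : 0 ≤ (1 : ℝ) / lam := by positivity
    nlinarith
  have part1 : ∀ u : Fin n → ℝ, (∀ i, u i ∈ Set.Ioo (0 : ℝ) 1) → ∀ i j,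
      |v T₁ u i - v T₁ u j| ≤ |v T₂ u i - v T₂ u j| := by
    intro u hu i j
    rcases le_total (u i) (u j) with h | h
    · exact aux u hu i j h
    · rw [abs_sub_comm (v T₁ u i), abs_sub_comm (v T₂ u i)]
      exact aux u hu j i h
  have part2 : ∀ u : Fin n → ℝ, (∀ i, u i ∈ Set.Ioo (0 : ℝ) 1) →
      Θ (fun i j => |v T₂ u i - v T₂ u j| ≤ δ) →
      Θ (fun i j => |v T₁ u i - v T₁ u j| ≤ δ) := by
    intro u hu h2
    exact hΘ _ _ (fun i j h => le_trans (part1 u hu i j) h) h2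
  refine ⟨part1, part2, ?_⟩
  set S : Set (Fin n → ℝ) := {u | ∀ i, u i ∈ Set.Ioo (0 : ℝ) 1} with hSdef
  have hSeq : S = Set.pi Set.univ (fun _ : Fin n => Set.Ioo (0 : ℝ) 1) := by
    ext u; simp [hSdef, Set.mem_pi]
  have hSm : MeasurableSet S := by
    rw [hSeq]; exact MeasurableSet.univ_pi (fun _ => measurableSet_Ioo)
  have hnull : μ (U ⁻¹' Sᶜ) = 0 := by
    rw [← Measure.map_apply hU hSm.compl, hUd]
    haveI : IsProbabilityMeasure (MeasureTheory.volume.restrict (Set.Ioo (0 : ℝ) 1)) :=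
      ⟨by simp⟩
    have hfull : (Measure.pi fun _ : Fin n =>
        MeasureTheory.volume.restrict (Set.Ioo (0 : ℝ) 1)) S = 1 := by
      rw [hSeq, Measure.pi_pi]
      simp
    rw [measure_compl hSm (by finiteness), hfull]
    simp
  have hsub : {ω | Θ (fun i j => |v T₂ (U ω) i - v T₂ (U ω) j| ≤ δ)} ⊆
      {ω | Θ (fun i j => |v T₁ (U ω) i - v T₁ (U ω) j| ≤ δ)} ∪ U ⁻¹' Sᶜ := by
    intro ω hω
    by_cases h : U ω ∈ S
    · exact Or.inl (part2 (U ω) h hω)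
    · exact Or.inr h
  calc μ {ω | Θ (fun i j => |v T₂ (U ω) i - v T₂ (U ω) j| ≤ δ)}
      ≤ μ ({ω | Θ (fun i j => |v T₁ (U ω) i - v T₁ (U ω) j| ≤ δ)} ∪ U ⁻¹' Sᶜ) :=
        measure_mono hsub
    _ ≤ μ {ω | Θ (fun i j => |v T₁ (U ω) i - v T₁ (U ω) j| ≤ δ)} + μ (U ⁻¹' Sᶜ) :=
        measure_union_le _ _
    _ = μ {ω | Θ (fun i j => |v T₁ (U ω) i - v T₁ (U ω) j| ≤ δ)} := by
        rw [hnull, add_zero]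
end
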